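/- arXiv:2508.10870 — 3 statements merged into one kernel-verified Lean document; each statement's English description precedes it below -/
import Mathlib

section
/- Let G be a finite simple graph on the vertex set [n] without isolated vertices. The following conditions are equivalent: (a) the edge ideal I(G) is matroidal; (b) the complementary edge ideal I_c(G) is matroidal; (c) the complementary graph G^c is P_3-free (contains no induced path on three vertices); (d) G^c is a disjoint union of cliques; (e) G is a complete multipartite graph. -/
open MvPolynomial Finset

set_option maxHeartbeats 1000000
set_option synthInstance.maxHeartbeats 1000000

section Graphs

variable {V : Type*}

/-- A graph has no isolated vertices. -/
def SimpleGraph.NoIsolatedVertices (G : SimpleGraph V) : Prop :=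
  ∀ v : V, ∃ w : V, G.Adj v w

/-- `c(G)`: the number of connected components of `G` which are not isolated vertices. -/
noncomputable def SimpleGraph.cNum (G : SimpleGraph V) : ℕ :=
  Nat.card {c : G.ConnectedComponent // ∃ v w : V, G.Adj v w ∧ G.connectedComponentMk v = c}

/-- `G` contains an induced cycle on `s` vertices. -/
def SimpleGraph.HasInducedCycle (G : SimpleGraph V) (s : ℕ) : Prop :=
  ∃ f : ZMod s → V, Function.Injective f ∧
    ∀ i j : ZMod s, G.Adj (f i) (f j) ↔ (j = i + 1 ∨ i = j + 1)

/-- A graph is chordal if it has no induced cycle of length `≥ 4`. -/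
def SimpleGraph.Chordal (G : SimpleGraph V) : Prop :=
  ∀ s : ℕ, 4 ≤ s → ¬ G.HasInducedCycle s

/-- `G` has no induced path on three vertices. -/
def SimpleGraph.P3Free (G : SimpleGraph V) : Prop :=
  ¬ ∃ a b c : V, a ≠ c ∧ G.Adj a b ∧ G.Adj b c ∧ ¬ G.Adj a c

/-- `G` is a disjoint union of cliques: the vertices can be partitioned so that two
vertices are adjacent exactly when they are distinct and lie in the same part. -/
def SimpleGraph.IsDisjointUnionOfCliques (G : SimpleGraph V) : Prop :=
  ∃ (ι : Type) (P : V → ι), ∀ a b : V, G.Adj a b ↔ (a ≠ b ∧ P a = P b)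

/-- `G` is complete multipartite: the vertices can be partitioned so that two vertices
are adjacent exactly when they lie in different parts. -/
def SimpleGraph.IsCompleteMultipartite' (G : SimpleGraph V) : Prop :=
  ∃ (ι : Type) (P : V → ι), ∀ a b : V, G.Adj a b ↔ P a ≠ P b

/-- The path graph `P_s` on `s` vertices `0 — 1 — ⋯ — (s-1)`. -/
def pathG (s : ℕ) : SimpleGraph (Fin s) :=
  SimpleGraph.fromRel (fun i j => (i : ℕ) + 1 = (j : ℕ))

/-- The graph `2K₂`, the disjoint union of two edges. -/
def twoK2 : SimpleGraph (Fin 4) :=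
  SimpleGraph.fromRel (fun i j => (i = 0 ∧ j = 1) ∨ (i = 2 ∧ j = 3))

end Graphs

namespace CompEdge

variable (K : Type*) [Field K] (n : ℕ)

/-- The squarefree monomial `∏ i ∈ F, xᵢ` associated to a set `F` of variables. -/
noncomputable def sqMon (F : Finset (Fin n)) : MvPolynomial (Fin n) K :=
  ∏ i ∈ F, X i

/-- The monomial prime ideal `P_F = (xᵢ : i ∈ F)`. -/
noncomputable def PF (F : Finset (Fin n)) : Ideal (MvPolynomial (Fin n) K) :=
  Ideal.span ((fun i => (X i : MvPolynomial (Fin n) K)) '' F)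

/-- `u` is a (monic) monomial. -/
def IsMonomial (u : MvPolynomial (Fin n) K) : Prop :=
  ∃ a : Fin n →₀ ℕ, u = monomial a (1 : K)

/-- `u` belongs to the minimal monomial generating set `G(I)` of a monomial ideal `I`:
`u` is a monomial of `I` such that the only monomial of `I` dividing `u` is `u` itself. -/
def IsMinGen (I : Ideal (MvPolynomial (Fin n) K)) (u : MvPolynomial (Fin n) K) : Prop :=
  IsMonomial K n u ∧ u ∈ I ∧
    ∀ v : MvPolynomial (Fin n) K, IsMonomial K n v → v ∈ I → v ∣ u → v = u

/-- A monomial ideal: an ideal generated by monomials. -/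
def IsMonomialIdeal (I : Ideal (MvPolynomial (Fin n) K)) : Prop :=
  ∃ A : Set (Fin n →₀ ℕ), I = Ideal.span ((fun a => (monomial a (1 : K))) '' A)

/-- A squarefree monomial ideal: an ideal generated by squarefree monomials. -/
def IsSqfreeMonomialIdeal (I : Ideal (MvPolynomial (Fin n) K)) : Prop :=
  ∃ 𝒜 : Set (Finset (Fin n)), I = Ideal.span (sqMon K n '' 𝒜)

/-- The complementary ideal `I_c(I) = ( x₁⋯xₙ/u : u ∈ G(I) )` of a squarefree monomial
ideal `I`.  (For `I = 0` the set of minimal generators is empty and this is `0`.) -/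
noncomputable def compIdeal (I : Ideal (MvPolynomial (Fin n) K)) :
    Ideal (MvPolynomial (Fin n) K) :=
  Ideal.span {v | ∃ F : Finset (Fin n),
    IsMinGen K n I (sqMon K n F) ∧ v = sqMon K n (Finset.univ \ F)}

/-- A polymatroidal ideal: a monomial ideal generated in a single degree satisfying the
exchange property. -/
def IsPolymatroidal (I : Ideal (MvPolynomial (Fin n) K)) : Prop :=
  IsMonomialIdeal K n I ∧
  (∃ d : ℕ, ∀ u, IsMinGen K n I u → u.totalDegree = d) ∧
  (∀ u v, IsMinGen K n I u → IsMinGen K n I v → ∀ i : Fin n,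
    degreeOf i v < degreeOf i u →
      ∃ j : Fin n, degreeOf j u < degreeOf j v ∧
        ∃ w, IsMinGen K n I w ∧ X i * w = X j * u)

/-- A matroidal ideal: a squarefree polymatroidal ideal. -/
def IsMatroidal (I : Ideal (MvPolynomial (Fin n) K)) : Prop :=
  IsPolymatroidal K n I ∧ IsSqfreeMonomialIdeal K n I

/-- The edge ideal `I(G) = ( xᵢxⱼ : {i,j} ∈ E(G) )` of a graph. -/
noncomputable def edgeIdeal (G : SimpleGraph (Fin n)) : Ideal (MvPolynomial (Fin n) K) :=
  Ideal.span {u | ∃ i j : Fin n, G.Adj i j ∧ u = X i * X j}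

/-- The complementary edge ideal `I_c(G) = ( x₁⋯xₙ/(xᵢxⱼ) : {i,j} ∈ E(G) )`. -/
noncomputable def compEdgeIdeal (G : SimpleGraph (Fin n)) :
    Ideal (MvPolynomial (Fin n) K) :=
  Ideal.span {u | ∃ i j : Fin n, G.Adj i j ∧ u = sqMon K n (Finset.univ \ {i, j})}

/-- The `t`-clique ideal `K_t(G)` of a graph, generated by the monomials `x_F` with
`F` a `t`-clique of `G`. -/
noncomputable def cliqueIdeal (t : ℕ) (G : SimpleGraph (Fin n)) :
    Ideal (MvPolynomial (Fin n) K) :=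
  Ideal.span {u | ∃ T : Finset (Fin n), G.IsNClique t T ∧ u = sqMon K n T}

/-- The Alexander dual of a squarefree monomial ideal `I`: if `I = ⋂ᵢ P_{Fᵢ}` is the
minimal primary decomposition (the primary components `P_{Fᵢ}` being the minimal primes
of `I`), then `I^∨ = (x_{F₁}, …, x_{Fₘ})`. -/
noncomputable def alexDual (I : Ideal (MvPolynomial (Fin n) K)) :
    Ideal (MvPolynomial (Fin n) K) :=
  Ideal.span {u | ∃ F : Finset (Fin n), PF K n F ∈ I.minimalPrimes ∧ u = sqMon K n F}

/-- The complementary cover ideal `J_c(G) = I_c(G)^∨`. -/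
noncomputable def compCoverIdeal (G : SimpleGraph (Fin n)) :
    Ideal (MvPolynomial (Fin n) K) :=
  alexDual K n (compEdgeIdeal K n G)

/-- The squarefree Veronese ideal `I_{n,d}`, generated by all squarefree monomials
of degree `d`. -/
noncomputable def veroneseIdeal (d : ℕ) : Ideal (MvPolynomial (Fin n) K) :=
  Ideal.span {u | ∃ F : Finset (Fin n), F.card = d ∧ u = sqMon K n F}

/-- For a monomial ideal `J`, `∂J` is the ideal generated by the monomials `u/xᵢ` where
`u` is a minimal monomial generator of `J` and `xᵢ` divides `u`. -/
noncomputable def derivIdeal (J : Ideal (MvPolynomial (Fin n) K)) :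
    Ideal (MvPolynomial (Fin n) K) :=
  Ideal.span {v | ∃ u, IsMinGen K n J u ∧ ∃ i : Fin n, X i ∣ u ∧ X i * v = u}

/-- The graded maximal ideal `m = (x₁, …, xₙ)`. -/
noncomputable def mIdeal : Ideal (MvPolynomial (Fin n) K) :=
  Ideal.span (Set.range (X : Fin n → MvPolynomial (Fin n) K))

/-- `I` is unmixed: all associated primes of `S/I` have the same height. -/
def IsUnmixed (I : Ideal (MvPolynomial (Fin n) K)) : Prop :=
  ∀ p q : Ideal (MvPolynomial (Fin n) K),
    (hp : IsAssociatedPrime p (MvPolynomial (Fin n) K ⧸ I)) →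
    (hq : IsAssociatedPrime q (MvPolynomial (Fin n) K ⧸ I)) →
    Order.height (⟨p, hp.1⟩ : PrimeSpectrum (MvPolynomial (Fin n) K)) =
      Order.height (⟨q, hq.1⟩ : PrimeSpectrum (MvPolynomial (Fin n) K))

variable (M : Type*) [AddCommGroup M] [Module (MvPolynomial (Fin n) K) M]

/-- The depth of a module over `S = K[x₁,…,xₙ]` with respect to the graded maximal
ideal: the supremum of the lengths of `M`-regular sequences with entries in `m`. -/
noncomputable def mdepth : ℕ :=
  sSup {r : ℕ | ∃ rs : List (MvPolynomial (Fin n) K), rs.length = r ∧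
    (∀ f ∈ rs, f ∈ mIdeal K n) ∧ RingTheory.Sequence.IsRegular M rs}

/-- The Krull dimension of a module: `dim M = dim S/ann M`. -/
noncomputable def mdim : WithBot ℕ∞ :=
  ringKrullDim (MvPolynomial (Fin n) K ⧸ Module.annihilator (MvPolynomial (Fin n) K) M)

/-- A module over `S` is Cohen–Macaulay if it is zero or its depth equals its
Krull dimension. -/
noncomputable def IsCMmod : Prop :=
  Subsingleton M ∨ (mdepth K n M : WithBot ℕ∞) = mdim K n M

end CompEdge

namespace CompEdge

/-- The `i`-th term `M ⊗ Λⁱ(Sⁿ)` of the Koszul complex of `x₁, …, xₙ` with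
coefficients in `M`, realized as the free `M`-module on the `i`-element subsets
of the variables. -/
abbrev KosTerm (n : ℕ) (M : Type*) [AddCommGroup M] (i : ℕ) :=
  {F : Finset (Fin n) // F.card = i} →₀ M

variable (K : Type*) [Field K] (n : ℕ)
variable (M : Type*) [AddCommGroup M] [Module (MvPolynomial (Fin n) K) M]

/-- The Koszul differential `M ⊗ Λ^{i+1}(Sⁿ) → M ⊗ Λ^{i}(Sⁿ)`,
`e_F ⊗ m ↦ ∑_{k ∈ F} (-1)^{|{j ∈ F : j < k}|} e_{F∖{k}} ⊗ (x_k m)`. -/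
noncomputable def kosD (i : ℕ) :
    KosTerm n M (i + 1) →ₗ[MvPolynomial (Fin n) K] KosTerm n M i :=
  Finsupp.lsum (MvPolynomial (Fin n) K)
    fun F : {F : Finset (Fin n) // F.card = i + 1} =>
      ∑ k ∈ F.1.attach,
        ((-1 : MvPolynomial (Fin n) K) ^ ((F.1.filter (fun j => j < (k : Fin n))).card) *
          X (k : Fin n)) •
          (Finsupp.lsingle (⟨F.1.erase (k : Fin n), by
            rw [Finset.card_erase_of_mem k.2, F.2]; omega⟩ :
              {F : Finset (Fin n) // F.card = i}) :
            M →ₗ[MvPolynomial (Fin n) K] KosTerm n M i)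

/-- The cycles in homological degree `i` of the Koszul complex. -/
noncomputable def kosZ (i : ℕ) : Submodule (MvPolynomial (Fin n) K) (KosTerm n M i) :=
  match i with
  | 0 => ⊤
  | (j + 1) => LinearMap.ker (kosD K n M j)

/-- The boundaries in homological degree `i` of the Koszul complex. -/
noncomputable def kosB (i : ℕ) : Submodule (MvPolynomial (Fin n) K) (KosTerm n M i) :=
  LinearMap.range (kosD K n M i)

/-- The `i`-th Koszul homology `H_i(x₁,…,xₙ; M) = Tor_i^S(K, M)`. -/
@[reducible] noncomputable def KosHomology (i : ℕ) :=
  kosZ K n M i ⧸ (Submodule.comap (kosZ K n M i).subtype (kosB K n M i))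

variable [Module K M] [IsScalarTower K (MvPolynomial (Fin n) K) M]

/-- The `i`-th total Betti number `β_i(M) = dim_K Tor_i^S(K, M)`, computed as the
`K`-dimension of the `i`-th Koszul homology of `M`. -/
noncomputable def bettiTot (i : ℕ) : ℕ :=
  Module.finrank K (KosHomology K n M i)

/-- The projective dimension of `M`: the largest `i` with `β_i(M) ≠ 0`. -/
noncomputable def projDim : ℕ :=
  sSup {i : ℕ | bettiTot K n M i ≠ 0}

/-- For an ideal `I ⊆ S`, the internal-degree-`j` graded piece of the `i`-th term of the
Koszul complex with coefficients in `I`: the basis element `e_F` has internal degree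
`|F| = i`, so the coefficient of `e_F` must be homogeneous of degree `j - i`. -/
noncomputable def kosDegPiece (I : Ideal (MvPolynomial (Fin n) K)) (i j : ℕ) :
    Submodule K (KosTerm n I i) :=
  if i ≤ j then
    ⨅ F : {F : Finset (Fin n) // F.card = i},
      Submodule.comap
        (((I.subtype).restrictScalars K).comp
          (Finsupp.lapply F : KosTerm n I i →ₗ[K] I))
        (homogeneousSubmodule (Fin n) K (j - i))
  else ⊥

/-- The degree-`j` cycles of the Koszul complex of an ideal. -/
noncomputable def kosZdeg (I : Ideal (MvPolynomial (Fin n) K)) (i j : ℕ) :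
    Submodule K (KosTerm n I i) :=
  (kosZ K n I i).restrictScalars K ⊓ kosDegPiece K n I i j

/-- The degree-`j` boundaries of the Koszul complex of an ideal. -/
noncomputable def kosBdeg (I : Ideal (MvPolynomial (Fin n) K)) (i j : ℕ) :
    Submodule K (KosTerm n I i) :=
  (kosB K n I i).restrictScalars K ⊓ kosDegPiece K n I i j

/-- The graded Betti number `β_{i,j}(I) = dim_K Tor_i^S(K, I)_j` of an ideal `I ⊆ S`,
computed as the `K`-dimension of the degree-`j` part of the `i`-th Koszul homology
of `I`. -/
noncomputable def betti (I : Ideal (MvPolynomial (Fin n) K)) (i j : ℕ) : ℕ :=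
  Module.finrank K
    (↥(kosZdeg K n I i j) ⧸
      Submodule.comap (kosZdeg K n I i j).subtype (kosBdeg K n I i j))

/-- The Castelnuovo–Mumford regularity `reg I = max{ j - i : β_{i,j}(I) ≠ 0 }`. -/
noncomputable def regNat (I : Ideal (MvPolynomial (Fin n) K)) : ℕ :=
  sSup {d : ℕ | ∃ i j : ℕ, betti K n I i j ≠ 0 ∧ j = i + d}

/-- A homogeneous ideal has a `d`-linear resolution: it is generated by homogeneous
elements of degree `d` and `β_{i,j}(I) ≠ 0` implies `j = d + i`. -/
noncomputable def HasLinearResolution (I : Ideal (MvPolynomial (Fin n) K)) : Prop :=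
  ∃ d : ℕ, (∃ A : Set (MvPolynomial (Fin n) K),
      A ⊆ (homogeneousSubmodule (Fin n) K d : Set (MvPolynomial (Fin n) K)) ∧
      I = Ideal.span A) ∧
    ∀ i j : ℕ, betti K n I i j ≠ 0 → j = d + i

/-- A monomial ideal has linear quotients: its minimal monomial generators can be ordered
`u₁, …, uₘ` so that each colon ideal `(u₁,…,u_{i-1}) : (u_i)` is generated by variables. -/
def HasLinearQuotients (I : Ideal (MvPolynomial (Fin n) K)) : Prop :=
  ∃ (m : ℕ) (u : Fin m → MvPolynomial (Fin n) K), Function.Injective u ∧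
    {w | IsMinGen K n I w} = Set.range u ∧
    ∀ i : Fin m, 0 < (i : ℕ) →
      ∃ V ⊆ Set.range (X : Fin n → MvPolynomial (Fin n) K),
        Submodule.colon (Ideal.span (u '' {j : Fin m | (j : ℕ) < (i : ℕ)}))
          (Ideal.span {u i}) = Ideal.span V

/-- The ideal `I_{⟨j⟩}` generated by the degree-`j` homogeneous elements of `I`. -/
noncomputable def componentPart (I : Ideal (MvPolynomial (Fin n) K)) (j : ℕ) :
    Ideal (MvPolynomial (Fin n) K) :=
  Ideal.span {f | f ∈ I ∧ f ∈ homogeneousSubmodule (Fin n) K j}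

/-- An ideal is componentwise linear if each `I_{⟨j⟩}` has a linear resolution. -/
noncomputable def IsComponentwiseLinear (I : Ideal (MvPolynomial (Fin n) K)) : Prop :=
  ∀ j : ℕ, HasLinearResolution K n (componentPart K n I j)

/-- A submodule of `S/I` is graded if it is generated by images of homogeneous
polynomials. -/
def IsGradedSubmodule (I : Ideal (MvPolynomial (Fin n) K))
    (N : Submodule (MvPolynomial (Fin n) K) (MvPolynomial (Fin n) K ⧸ I)) : Prop :=
  ∃ T : Set (MvPolynomial (Fin n) K),
    (∀ f ∈ T, ∃ d : ℕ, f ∈ homogeneousSubmodule (Fin n) K d) ∧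
    N = Submodule.span (MvPolynomial (Fin n) K) (Ideal.Quotient.mk I '' T)

/-- The subquotient `P/N` of `S/I` associated to submodules `N ≤ P`. -/
abbrev subquot {I : Ideal (MvPolynomial (Fin n) K)}
    (N P : Submodule (MvPolynomial (Fin n) K) (MvPolynomial (Fin n) K ⧸ I)) :=
  ↥P ⧸ (Submodule.comap P.subtype N)

/-- `S/I` is sequentially Cohen–Macaulay: there is a finite filtration
`0 = M₀ ⊆ M₁ ⊆ ⋯ ⊆ M_r = S/I` by graded submodules with each quotient `Mᵢ/Mᵢ₋₁`
Cohen–Macaulay and `dim (M₁/M₀) < dim (M₂/M₁) < ⋯ < dim (M_r/M_{r-1})`. -/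
noncomputable def IsSeqCM (I : Ideal (MvPolynomial (Fin n) K)) : Prop :=
  ∃ (r : ℕ) (F : ℕ → Submodule (MvPolynomial (Fin n) K) (MvPolynomial (Fin n) K ⧸ I)),
    F 0 = ⊥ ∧ F r = ⊤ ∧ (∀ i, i < r → F i ≤ F (i + 1)) ∧
    (∀ i, i ≤ r → IsGradedSubmodule K n I (F i)) ∧
    (∀ i, i < r → IsCMmod K n (subquot K n (F i) (F (i + 1)))) ∧
    (∀ i, i + 1 < r →
      mdim K n (subquot K n (F i) (F (i + 1))) <
        mdim K n (subquot K n (F (i + 1)) (F (i + 2))))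

/-- `S/I` is Gorenstein: it is the zero ring, or it is Cohen–Macaulay with
Cohen–Macaulay type `1`, i.e. the last total Betti number in its minimal graded free
resolution over `S` equals `1`. -/
noncomputable def IsGorensteinQuot (I : Ideal (MvPolynomial (Fin n) K)) : Prop :=
  Subsingleton (MvPolynomial (Fin n) K ⧸ I) ∨
    (IsCMmod K n (MvPolynomial (Fin n) K ⧸ I) ∧
      bettiTot K n (MvPolynomial (Fin n) K ⧸ I)
        (projDim K n (MvPolynomial (Fin n) K ⧸ I)) = 1)

/-- The canonical module `ω_{S/I} = Ext_S^{n - depth S/I}(S/I, S)` of `S/I`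
(for `S/I` Cohen–Macaulay, `n - depth S/I = height I` is the codimension). -/
noncomputable def canonicalModule (I : Ideal (MvPolynomial (Fin n) K)) :
    ModuleCat (MvPolynomial (Fin n) K) :=
  ((Ext (MvPolynomial (Fin n) K) (ModuleCat (MvPolynomial (Fin n) K))
      (n - mdepth K n (MvPolynomial (Fin n) K ⧸ I))).obj
    (Opposite.op (ModuleCat.of (MvPolynomial (Fin n) K) (MvPolynomial (Fin n) K ⧸ I)))).obj
    (ModuleCat.of (MvPolynomial (Fin n) K) (MvPolynomial (Fin n) K))

/-- The trace of the canonical module of `S/I`: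
`tr(ω) = Σ_{φ ∈ Hom(ω, S/I)} φ(ω)`, as a submodule of `S/I`. -/
noncomputable def canonicalTrace (I : Ideal (MvPolynomial (Fin n) K)) :
    Submodule (MvPolynomial (Fin n) K) (MvPolynomial (Fin n) K ⧸ I) :=
  ⨆ φ : (canonicalModule K n I →ₗ[MvPolynomial (Fin n) K] (MvPolynomial (Fin n) K ⧸ I)),
    LinearMap.range φ

/-- `S/I` is nearly Gorenstein: it is Cohen–Macaulay and the graded maximal ideal of
`S/I` is contained in the trace of the canonical module. -/
noncomputable def IsNearlyGorensteinQuot (I : Ideal (MvPolynomial (Fin n) K)) : Prop :=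
  IsCMmod K n (MvPolynomial (Fin n) K ⧸ I) ∧
    Submodule.restrictScalars (MvPolynomial (Fin n) K)
        (Ideal.map (Ideal.Quotient.mk I) (mIdeal K n)) ≤
      canonicalTrace K n I

end CompEdge

/-!
A squarefree ideal generated in a single degree is matroidal exactly when the supports of its
generators satisfy the basis exchange axiom, i.e. are the bases of a matroid. For the edges of a
graph without isolated vertices, exchange says that every vertex is adjacent to an endpoint of
every edge: non-adjacency is transitive, which is to say that `G` is complete multipartite, or
equivalently that `Gᶜ` is `P₃`-free, or a disjoint union of cliques. The generators of `I_c(G)`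
are supported on the complements of the edges, which are the bases of the dual matroid, so
`I_c(G)` is matroidal exactly when `I(G)` is.
-/

namespace Finset

variable {α : Type*} [DecidableEq α] {𝒜 : Set (Finset α)}

def ExchangeProperty (𝒜 : Set (Finset α)) : Prop :=
  ∀ E ∈ 𝒜, ∀ F ∈ 𝒜, ∀ i ∈ E, i ∉ F → ∃ j ∈ F, j ∉ E ∧ insert j (E.erase i) ∈ 𝒜

lemma toFinsupp_val_le_toFinsupp_val_iff {E F : Finset α} :
    Multiset.toFinsupp E.val ≤ Multiset.toFinsupp F.val ↔ E ⊆ F :=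
  Finsupp.orderIsoMultiset.symm.le_iff_le.trans val_le_iff

lemma exchangeProperty_iff_matroid_exchangeProperty :
    ExchangeProperty 𝒜 ↔ Matroid.ExchangeProperty (fun B : Set α => ∃ F ∈ 𝒜, ↑F = B) := by
  constructor
  · rintro h _ _ ⟨E, hE, rfl⟩ ⟨F, hF, rfl⟩ i ⟨hiE, hiF⟩
    obtain ⟨j, hjF, hjE, hmem⟩ := h E hE F hF i hiE hiF
    exact ⟨j, ⟨hjF, hjE⟩, _, hmem, by simp⟩
  · intro h E hE F hF i hiE hiF
    obtain ⟨j, ⟨hjF, hjE⟩, W, hW, hWeq⟩ := h _ _ ⟨E, hE, rfl⟩ ⟨F, hF, rfl⟩ i ⟨hiE, hiF⟩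
    have hW' : W = insert j (E.erase i) := coe_injective (by simpa using hWeq)
    exact ⟨j, hjF, hjE, hW' ▸ hW⟩

/-- The complements of the bases of a matroid are the bases of its dual. -/
lemma ExchangeProperty.image_compl [Fintype α] (h : ExchangeProperty 𝒜) :
    ExchangeProperty (compl '' 𝒜) := by
  rcases 𝒜.eq_empty_or_nonempty with rfl | ⟨F₀, hF₀⟩
  · simp [ExchangeProperty]
  let M := Matroid.ofIsBaseOfFinite Set.finite_univ _ ⟨_, F₀, hF₀, rfl⟩
    (exchangeProperty_iff_matroid_exchangeProperty.1 h) fun _ _ => Set.subset_univ _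
  have hdual : M✶.IsBase = fun B => ∃ F ∈ compl '' 𝒜, ↑F = B := by
    ext B
    rw [Matroid.dual_isBase_iff (show B ⊆ M.E from Set.subset_univ B)]
    simp only [M, Matroid.ofIsBaseOfFinite_isBase, Matroid.ofIsBaseOfFinite_E,
      ← Set.compl_eq_univ_sdiff, Set.exists_mem_image, coe_compl]
    exact exists_congr fun F => and_congr_right fun _ => eq_compl_comm.trans eq_comm
  exact exchangeProperty_iff_matroid_exchangeProperty.2 (hdual ▸ M✶.isBase_exchange)

lemma exchangeProperty_image_compl_iff [Fintype α] :
    ExchangeProperty (compl '' 𝒜) ↔ ExchangeProperty 𝒜 :=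
  ⟨fun h => by simpa [Set.image_image] using h.image_compl, ExchangeProperty.image_compl⟩

end Finset

namespace CompEdge

variable {K : Type*} [Field K] {n : ℕ}

lemma sqMon_eq_monomial (F : Finset (Fin n)) :
    sqMon K n F = monomial (Multiset.toFinsupp F.val) 1 := by
  rw [monomial_eq, C_1, one_mul, Finsupp.prod, Multiset.toFinsupp_support, F.val_toFinset]
  refine Finset.prod_congr rfl fun i hi => ?_
  rw [Multiset.toFinsupp_apply, Multiset.count_eq_one_of_mem F.nodup hi, pow_one]

lemma image_sqMon (𝒜 : Set (Finset (Fin n))) :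
    sqMon K n '' 𝒜 =
      (fun a => monomial a (1 : K)) '' ((fun F => Multiset.toFinsupp F.val) '' 𝒜) := by
  rw [Set.image_image]
  simp only [sqMon_eq_monomial]

lemma sqMon_injective : Function.Injective (sqMon K n) := fun E F h => by
  rw [sqMon_eq_monomial, sqMon_eq_monomial] at h
  exact Finset.val_injective (Multiset.toFinsupp.injective (monomial_left_injective one_ne_zero h))

lemma sqMon_ne_zero (F : Finset (Fin n)) : sqMon K n F ≠ 0 := by
  rw [sqMon_eq_monomial, Ne, monomial_eq_zero]
  exact one_ne_zero

lemma totalDegree_sqMon (F : Finset (Fin n)) : (sqMon K n F).totalDegree = F.card := by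
  rw [sqMon_eq_monomial, totalDegree_monomial _ one_ne_zero]
  exact Multiset.toFinsupp_sum_eq F.val

lemma degreeOf_sqMon (F : Finset (Fin n)) (x : Fin n) :
    degreeOf x (sqMon K n F) = if x ∈ F then 1 else 0 := by
  rw [sqMon_eq_monomial, degreeOf_monomial_eq _ _ one_ne_zero, Multiset.toFinsupp_apply,
    Multiset.count_eq_of_nodup F.nodup]
  rfl

lemma degreeOf_sqMon_lt_degreeOf_sqMon_iff {E F : Finset (Fin n)} {x : Fin n} :
    degreeOf x (sqMon K n E) < degreeOf x (sqMon K n F) ↔ x ∈ F ∧ x ∉ E := by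
  rw [degreeOf_sqMon, degreeOf_sqMon]
  split_ifs <;> simp_all

lemma X_mul_sqMon {F : Finset (Fin n)} {i : Fin n} (h : i ∉ F) :
    X i * sqMon K n F = sqMon K n (insert i F) := by
  rw [sqMon, sqMon, Finset.prod_insert h]

lemma X_mul_sqMon_eq_X_mul_sqMon_iff {E F : Finset (Fin n)} {i j : Fin n} (hi : i ∈ F)
    (hj : j ∉ F) : X i * sqMon K n E = X j * sqMon K n F ↔ E = insert j (F.erase i) := by
  have hij : i ≠ j := ne_of_mem_of_not_mem hi hj
  constructor
  · intro h
    -- the right-hand side has `xᵢ`-degree one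
    have hiE : i ∉ E := by
      have hdeg := congrArg (degreeOf i) h
      rw [mul_comm, (degreeOf_mul_X_eq_degreeOf_add_one_iff i _).2 (sqMon_ne_zero E), mul_comm,
        degreeOf_mul_X_of_ne _ hij, degreeOf_sqMon, degreeOf_sqMon, if_pos hi] at hdeg
      simpa using hdeg
    rw [X_mul_sqMon hiE, X_mul_sqMon hj] at h
    rw [← Finset.erase_insert hiE, sqMon_injective h, Finset.erase_insert_of_ne hij.symm]
  · rintro rfl
    rw [X_mul_sqMon (by simp [hij]), X_mul_sqMon hj, Finset.insert_comm, Finset.insert_erase hi]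

lemma monomial_mem_span_sqMon_iff {𝒜 : Set (Finset (Fin n))} {a : Fin n →₀ ℕ} :
    monomial a (1 : K) ∈ Ideal.span (sqMon K n '' 𝒜) ↔
      ∃ F ∈ 𝒜, Multiset.toFinsupp F.val ≤ a := by
  rw [image_sqMon, mem_ideal_span_monomial_image]
  simp

lemma isMinGen_span_sqMon_iff {𝒜 : Set (Finset (Fin n))} {d : ℕ}
    (hd : ∀ F ∈ 𝒜, F.card = d) (u : MvPolynomial (Fin n) K) :
    IsMinGen K n (Ideal.span (sqMon K n '' 𝒜)) u ↔ ∃ F ∈ 𝒜, u = sqMon K n F := by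
  constructor
  · rintro ⟨⟨a, rfl⟩, hmem, hmin⟩
    obtain ⟨F, hF, hle⟩ := monomial_mem_span_sqMon_iff.1 hmem
    refine ⟨F, hF, (hmin _ ⟨_, sqMon_eq_monomial F⟩ (Ideal.subset_span ⟨F, hF, rfl⟩) ?_).symm⟩
    rw [sqMon_eq_monomial, monomial_dvd_monomial]
    exact ⟨Or.inr hle, dvd_rfl⟩
  · rintro ⟨F, hF, rfl⟩
    refine ⟨⟨_, sqMon_eq_monomial F⟩, Ideal.subset_span ⟨F, hF, rfl⟩, ?_⟩
    rintro v ⟨b, rfl⟩ hv hdvd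
    obtain ⟨E, hE, hEb⟩ := monomial_mem_span_sqMon_iff.1 hv
    rw [sqMon_eq_monomial, monomial_dvd_monomial] at hdvd
    have hbF : b ≤ Multiset.toFinsupp F.val := hdvd.1.resolve_left one_ne_zero
    -- all generators have the same degree, so the generator below `b` must be `F` itself
    have hEF : E = F := Finset.eq_of_subset_of_card_le
      (Finset.toFinsupp_val_le_toFinsupp_val_iff.1 (hEb.trans hbF)) (by rw [hd F hF, hd E hE])
    rw [sqMon_eq_monomial, le_antisymm hbF (hEF ▸ hEb)]

theorem isMatroidal_span_sqMon_iff {𝒜 : Set (Finset (Fin n))} {d : ℕ}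
    (hd : ∀ F ∈ 𝒜, F.card = d) :
    IsMatroidal K n (Ideal.span (sqMon K n '' 𝒜)) ↔ Finset.ExchangeProperty 𝒜 := by
  have hgen := isMinGen_span_sqMon_iff (K := K) hd
  constructor
  · rintro ⟨⟨-, -, hex⟩, -⟩ E hE F hF i hiE hiF
    obtain ⟨j, hj, w, hw, heq⟩ := hex _ _ ((hgen _).2 ⟨E, hE, rfl⟩) ((hgen _).2 ⟨F, hF, rfl⟩) i
      (degreeOf_sqMon_lt_degreeOf_sqMon_iff.2 ⟨hiE, hiF⟩)
    obtain ⟨W, hW, rfl⟩ := (hgen w).1 hw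
    obtain ⟨hjF, hjE⟩ := degreeOf_sqMon_lt_degreeOf_sqMon_iff.1 hj
    exact ⟨j, hjF, hjE, (X_mul_sqMon_eq_X_mul_sqMon_iff hiE hjE).1 heq ▸ hW⟩
  · intro hex
    refine ⟨⟨⟨_, congrArg Ideal.span (image_sqMon 𝒜)⟩, ⟨d, fun u hu => ?_⟩,
      fun u v hu hv i hi => ?_⟩, ⟨𝒜, rfl⟩⟩
    · obtain ⟨F, hF, rfl⟩ := (hgen u).1 hu
      rw [totalDegree_sqMon, hd F hF]
    · obtain ⟨E, hE, rfl⟩ := (hgen u).1 hu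
      obtain ⟨F, hF, rfl⟩ := (hgen v).1 hv
      obtain ⟨hiE, hiF⟩ := degreeOf_sqMon_lt_degreeOf_sqMon_iff.1 hi
      obtain ⟨j, hjF, hjE, hmem⟩ := hex E hE F hF i hiE hiF
      exact ⟨j, degreeOf_sqMon_lt_degreeOf_sqMon_iff.2 ⟨hjF, hjE⟩, _, (hgen _).2 ⟨_, hmem, rfl⟩,
        (X_mul_sqMon_eq_X_mul_sqMon_iff hiE hjE).2 rfl⟩

end CompEdge

namespace SimpleGraph

variable {V : Type*} {G : SimpleGraph V}

lemma IsCompleteMultipartite.adj_or_adj (h : G.IsCompleteMultipartite) {r s : V}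
    (hrs : G.Adj r s) (v : V) : G.Adj v r ∨ G.Adj v s := by
  by_contra! hv
  exact not_isCompleteMultipartite_iff_exists_isPathGraph3Compl.2 ⟨v, r, s, hrs, hv.1, hv.2⟩ h

lemma compl_p3Free_iff : Gᶜ.P3Free ↔ G.IsCompleteMultipartite := by
  rw [P3Free, not_iff_comm, not_isCompleteMultipartite_iff_exists_isPathGraph3Compl]
  constructor
  · rintro ⟨v, w₁, w₂, h⟩
    exact ⟨w₁, v, w₂, h.fst_ne_snd, ⟨h.ne_fst.symm, fun h' => h.not_adj_fst h'.symm⟩,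
      ⟨h.ne_snd, h.not_adj_snd⟩, fun h' => h'.2 h.adj⟩
  · rintro ⟨a, b, c, hac, hab, hbc, hnac⟩
    rw [compl_adj] at hab hbc hnac
    exact ⟨b, a, c, not_not.1 fun h => hnac ⟨hac, h⟩, fun h => hab.2 h.symm, hbc.2⟩

lemma isCompleteMultipartite'_iff {V : Type} {G : SimpleGraph V} :
    G.IsCompleteMultipartite' ↔ G.IsCompleteMultipartite := by
  constructor
  · rintro ⟨ι, P, hP⟩
    refine ⟨fun a b c hab hbc => ?_⟩
    simp only [hP, ne_eq, not_not] at hab hbc ⊢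
    exact hab.trans hbc
  · intro h
    refine ⟨Quotient h.setoid, Quotient.mk _, fun a b => ?_⟩
    rw [ne_eq, Quotient.eq]
    exact not_not.symm

lemma compl_isDisjointUnionOfCliques_iff :
    Gᶜ.IsDisjointUnionOfCliques ↔ G.IsCompleteMultipartite' := by
  constructor
  · rintro ⟨ι, P, hP⟩
    refine ⟨ι, P, fun a b => ?_⟩
    rcases eq_or_ne a b with rfl | hab
    · simp
    · have h := hP a b
      rw [compl_adj] at h
      simp only [hab, ne_eq, not_false_eq_true, true_and] at h
      rw [ne_eq, ← h, not_not]
  · rintro ⟨ι, P, hP⟩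
    exact ⟨ι, P, fun a b => by simp only [compl_adj, hP, ne_eq, not_not]⟩

variable [DecidableEq V]

def edgeFamily (G : SimpleGraph V) : Set (Finset V) :=
  {F | ∃ a b, G.Adj a b ∧ F = {a, b}}

lemma card_of_mem_edgeFamily : ∀ F ∈ G.edgeFamily, F.card = 2 := by
  rintro _ ⟨a, b, h, rfl⟩
  exact Finset.card_pair h.ne

lemma adj_of_pair_mem_edgeFamily {a b : V} (h : {a, b} ∈ G.edgeFamily) (hab : a ≠ b) :
    G.Adj a b := by
  obtain ⟨x, y, hxy, heq⟩ := h
  have hclique : G.IsClique ((({a, b} : Finset V)) : Set V) := by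
    rw [heq, Finset.coe_pair]
    exact isClique_pair.2 fun _ => hxy
  rw [Finset.coe_pair] at hclique
  exact isClique_pair.1 hclique hab

theorem exchangeProperty_edgeFamily_iff (hG : G.NoIsolatedVertices) :
    Finset.ExchangeProperty G.edgeFamily ↔ G.IsCompleteMultipartite := by
  constructor
  · intro hex
    by_contra hCM
    obtain ⟨v, r, s, hrs, hvr, hvs⟩ := not_isCompleteMultipartite_iff_exists_isPathGraph3Compl.1 hCM
    obtain ⟨d, hvd⟩ := hG v
    have hd : d ∉ ({r, s} : Finset V) := by
      simp only [Finset.mem_insert, Finset.mem_singleton, not_or]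
      exact ⟨fun h => hvr (h ▸ hvd), fun h => hvs (h ▸ hvd)⟩
    -- exchanging `d` out of the edge `dv` against the edge `rs` joins `v` to `r` or `s`
    obtain ⟨j, hj, hjE, hmem⟩ :=
      hex {d, v} ⟨d, v, hvd.symm, rfl⟩ {r, s} ⟨r, s, hrs, rfl⟩ d (by simp) hd
    rw [Finset.erase_insert (by simpa using hvd.ne.symm)] at hmem
    have hjv := adj_of_pair_mem_edgeFamily hmem (by rintro rfl; simp at hjE)
    simp only [Finset.mem_insert, Finset.mem_singleton] at hj
    rcases hj with rfl | rfl
    exacts [hvr hjv.symm, hvs hjv.symm]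
  · rintro h _ ⟨p, q, hpq, rfl⟩ _ ⟨r, s, hrs, rfl⟩ i hi hirs
    obtain ⟨q', hiq', hpq'⟩ : ∃ q', G.Adj i q' ∧ ({p, q} : Finset V) = {i, q'} := by
      simp only [Finset.mem_insert, Finset.mem_singleton] at hi
      rcases hi with rfl | rfl
      exacts [⟨q, hpq, rfl⟩, ⟨p, hpq.symm, Finset.pair_comm _ _⟩]
    obtain ⟨j, hj, hjq'⟩ : ∃ j ∈ ({r, s} : Finset V), G.Adj j q' := by
      rcases h.adj_or_adj hrs q' with h' | h'
      exacts [⟨r, by simp, h'.symm⟩, ⟨s, by simp, h'.symm⟩]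
    have hji : j ≠ i := by
      rintro rfl
      exact hirs hj
    rw [hpq', Finset.erase_insert (by simpa using hiq'.ne)]
    exact ⟨j, hj, by simp [hji, hjq'.ne], j, q', hjq', rfl⟩

end SimpleGraph

namespace CompEdge

variable {K : Type*} [Field K] {n : ℕ}

lemma edgeIdeal_eq_span_sqMon (G : SimpleGraph (Fin n)) :
    edgeIdeal K n G = Ideal.span (sqMon K n '' G.edgeFamily) := by
  refine congrArg Ideal.span (Set.ext fun u => ⟨?_, ?_⟩)
  · rintro ⟨i, j, hij, rfl⟩
    exact ⟨{i, j}, ⟨i, j, hij, rfl⟩, Finset.prod_pair hij.ne⟩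
  · rintro ⟨_, ⟨i, j, hij, rfl⟩, rfl⟩
    exact ⟨i, j, hij, Finset.prod_pair hij.ne⟩

lemma compEdgeIdeal_eq_span_sqMon (G : SimpleGraph (Fin n)) :
    compEdgeIdeal K n G = Ideal.span (sqMon K n '' (compl '' G.edgeFamily)) := by
  refine congrArg Ideal.span (Set.ext fun u => ⟨?_, ?_⟩)
  · rintro ⟨i, j, hij, rfl⟩
    exact ⟨_, ⟨{i, j}, ⟨i, j, hij, rfl⟩, rfl⟩, by rw [Finset.compl_eq_univ_sdiff]⟩
  · rintro ⟨_, ⟨_, ⟨i, j, hij, rfl⟩, rfl⟩, rfl⟩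
    exact ⟨i, j, hij, by rw [Finset.compl_eq_univ_sdiff]⟩

end CompEdge

open CompEdge in
/-- For a graph `G` on `[n]` without isolated vertices, the following are
equivalent: (a) `I(G)` is matroidal; (b) `I_c(G)` is matroidal; (c) `Gᶜ` is `P₃`-free;
(d) `Gᶜ` is a disjoint union of cliques; (e) `G` is complete multipartite. -/
theorem edgeIdeal_matroidal_iff_complete_multipartite
    (K : Type*) [Field K] (n : ℕ) (G : SimpleGraph (Fin n))
    (hG : G.NoIsolatedVertices) :
    (IsMatroidal K n (edgeIdeal K n G) ↔ G.IsCompleteMultipartite') ∧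
    (IsMatroidal K n (compEdgeIdeal K n G) ↔ G.IsCompleteMultipartite') ∧
    (Gᶜ.P3Free ↔ G.IsCompleteMultipartite') ∧
    (Gᶜ.IsDisjointUnionOfCliques ↔ G.IsCompleteMultipartite') := by
  have hexch := G.exchangeProperty_edgeFamily_iff hG
  have hcard : ∀ F ∈ compl '' G.edgeFamily, F.card = n - 2 := by
    rintro _ ⟨F, hF, rfl⟩
    rw [Finset.card_compl, Fintype.card_fin, G.card_of_mem_edgeFamily F hF]
  refine ⟨?_, ?_, ?_, G.compl_isDisjointUnionOfCliques_iff⟩ <;>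
    rw [SimpleGraph.isCompleteMultipartite'_iff]
  · rw [edgeIdeal_eq_span_sqMon, isMatroidal_span_sqMon_iff G.card_of_mem_edgeFamily, hexch]
  · rw [compEdgeIdeal_eq_span_sqMon, isMatroidal_span_sqMon_iff hcard,
      Finset.exchangeProperty_image_compl_iff, hexch]
  · exact G.compl_p3Free_iff
end

section
/- Let S = K[x_1,…,x_n,y_1,…,y_m], let I_1 ⊂ K[x_1,…,x_n] and I_2 ⊂ K[y_1,…,y_m] be monomial ideals (viewed in S) such that x_1⋯x_n ∈ I_1 and y_1⋯y_m ∈ I_2. Fix integers k ≥ 1 and 0 < ℓ ≤ k, and set J_{ℓ−1} = Σ_{h=0}^{ℓ−1} (y_1⋯y_m)^{k−h} (x_1⋯x_n)^{h} I_1^{k−h} I_2^{h}. Then J_{ℓ−1} ∩ ( (y_1⋯y_m)^{k−ℓ} (x_1⋯x_n)^{ℓ} I_1^{k−ℓ} I_2^{ℓ} ) = (y_1⋯y_m)^{k−ℓ+1} I_2^{ℓ−1} (x_1⋯x_n)^{ℓ} I_1^{k−ℓ}. -/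
open MvPolynomial Finset

set_option maxHeartbeats 1000000
set_option synthInstance.maxHeartbeats 1000000

/-! The intersection is squeezed between `Y * X` and `Y ⊓ X`, where
`Y = (y₁⋯yₘ)^{k-ℓ+1} I₂^{ℓ-1}` involves only the `y`-variables and `X = (x₁⋯xₙ)^ℓ I₁^{k-ℓ}`
only the `x`-variables: every summand of `J_{ℓ-1}` lies in `Y` and the other ideal lies in `X`,
while `Y * X` lies in the summand `h = ℓ - 1` (as `x₁⋯xₙ ∈ I₁`) and in the other ideal
(as `y₁⋯yₘ ∈ I₂`). For monomial ideals in disjoint sets of variables `Y ⊓ X = Y * X`, since a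
monomial divisible by a monomial of `Y` and by one of `X` is divisible by their product. -/

open Pointwise

namespace MvPolynomial

variable {σ R : Type*} [CommSemiring R]

def IsMonomialIdealIn (s : Set σ) (I : Ideal (MvPolynomial σ R)) : Prop :=
  ∃ A : Set (σ →₀ ℕ), (∀ a ∈ A, ↑a.support ⊆ s) ∧
    I = Ideal.span ((fun a => monomial a (1 : R)) '' A)

theorem span_monomial_image_mul_span_monomial_image (A B : Set (σ →₀ ℕ)) :
    Ideal.span ((fun a => monomial a (1 : R)) '' A) *
        Ideal.span ((fun b => monomial b (1 : R)) '' B) =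
      Ideal.span ((fun c => monomial c (1 : R)) '' (A + B)) := by
  rw [Ideal.span_mul_span']
  congr 1
  ext p
  constructor
  · rintro ⟨-, ⟨a, ha, rfl⟩, -, ⟨b, hb, rfl⟩, rfl⟩
    exact ⟨a + b, Set.add_mem_add ha hb, by simp [monomial_mul]⟩
  · rintro ⟨-, ⟨a, ha, b, hb, rfl⟩, rfl⟩
    exact ⟨_, ⟨a, ha, rfl⟩, _, ⟨b, hb, rfl⟩, by simp [monomial_mul]⟩

namespace IsMonomialIdealIn

variable {s t : Set σ} {I J : Ideal (MvPolynomial σ R)}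

theorem top : IsMonomialIdealIn s (⊤ : Ideal (MvPolynomial σ R)) :=
  ⟨{0}, by simp, by simp⟩

theorem mul (hI : IsMonomialIdealIn s I) (hJ : IsMonomialIdealIn s J) :
    IsMonomialIdealIn s (I * J) := by
  classical
  obtain ⟨A, hA, rfl⟩ := hI
  obtain ⟨B, hB, rfl⟩ := hJ
  refine ⟨A + B, ?_, span_monomial_image_mul_span_monomial_image A B⟩
  rintro _ ⟨a, ha, b, hb, rfl⟩
  exact (Finset.coe_subset.2 Finsupp.support_add).trans
    (by simpa using Set.union_subset (hA a ha) (hB b hb))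

theorem pow (hI : IsMonomialIdealIn s I) (n : ℕ) : IsMonomialIdealIn s (I ^ n) := by
  induction n with
  | zero => simpa using top
  | succ n ih => simpa [pow_succ] using ih.mul hI

theorem span_X {i : σ} (hi : i ∈ s) :
    IsMonomialIdealIn s (Ideal.span {(X i : MvPolynomial σ R)}) :=
  ⟨{Finsupp.single i 1}, by simpa using hi, by simp [X]⟩

theorem span_prod_X {ι : Type*} (f : ι → σ) (u : Finset ι) (hf : ∀ i ∈ u, f i ∈ s) :
    IsMonomialIdealIn s (Ideal.span {∏ i ∈ u, (X (f i) : MvPolynomial σ R)}) := by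
  rw [← Ideal.prod_span_singleton]
  exact Finset.prod_induction _ _ (fun _ _ => mul) (by simpa using top)
    fun i hi => span_X (hf i hi)

theorem inf_eq_mul (hI : IsMonomialIdealIn s I) (hJ : IsMonomialIdealIn t J)
    (hst : Disjoint s t) : I ⊓ J = I * J := by
  refine le_antisymm ?_ Ideal.mul_le_inf
  obtain ⟨A, hA, rfl⟩ := hI
  obtain ⟨B, hB, rfl⟩ := hJ
  rintro p ⟨hpA, hpB⟩
  rw [SetLike.mem_coe, mem_ideal_span_monomial_image] at hpA hpB
  rw [span_monomial_image_mul_span_monomial_image, mem_ideal_span_monomial_image]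
  intro μ hμ
  obtain ⟨a, ha, haμ⟩ := hpA μ hμ
  obtain ⟨b, hb, hbμ⟩ := hpB μ hμ
  refine ⟨a + b, Set.add_mem_add ha hb, fun i => ?_⟩
  by_cases hi : i ∈ s
  · have hbi : b i = 0 := Finsupp.notMem_support_iff.1 fun h => hst.ne_of_mem hi (hB b hb h) rfl
    simpa [hbi] using haμ i
  · have hai : a i = 0 := Finsupp.notMem_support_iff.1 fun h => hi (hA a ha h)
    simpa [hai] using hbμ i

end IsMonomialIdealIn

theorem isMonomialIdealIn_range_inl {α β : Type*} {I : Ideal (MvPolynomial (α ⊕ β) R)}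
    (hI : ∃ A : Set ((α ⊕ β) →₀ ℕ), (∀ a ∈ A, ∀ j : β, a (Sum.inr j) = 0) ∧
      I = Ideal.span ((fun a => monomial a (1 : R)) '' A)) :
    IsMonomialIdealIn (Set.range Sum.inl) I := by
  obtain ⟨A, hA, rfl⟩ := hI
  refine ⟨A, fun a ha => ?_, rfl⟩
  rintro (i | j) hj
  · exact ⟨i, rfl⟩
  · exact absurd (hA a ha j) (Finsupp.mem_support_iff.1 hj)

theorem isMonomialIdealIn_range_inr {α β : Type*} {I : Ideal (MvPolynomial (α ⊕ β) R)}
    (hI : ∃ B : Set ((α ⊕ β) →₀ ℕ), (∀ b ∈ B, ∀ i : α, b (Sum.inl i) = 0) ∧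
      I = Ideal.span ((fun b => monomial b (1 : R)) '' B)) :
    IsMonomialIdealIn (Set.range Sum.inr) I := by
  obtain ⟨B, hB, rfl⟩ := hI
  refine ⟨B, fun b hb => ?_, rfl⟩
  rintro (i | j) hi
  · exact absurd (hB b hb i) (Finsupp.mem_support_iff.1 hi)
  · exact ⟨j, rfl⟩

end MvPolynomial

namespace Ideal

variable {R : Type*} [CommSemiring R] (I₁ I₂ : Ideal R) (u v : R)

/-- The summands of `J_{ℓ-1}`, with `u = x₁⋯xₙ` and `v = y₁⋯yₘ`. -/
def mixedPowerTerm (k h : ℕ) : Ideal R :=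
  span {v ^ (k - h) * u ^ h} * I₁ ^ (k - h) * I₂ ^ h

variable {I₁ I₂ u v}

theorem mixedPowerTerm_le_of_lt (hv : v ∈ I₂) {k h ℓ : ℕ} (hh : h < ℓ) (hℓ : ℓ ≤ k) :
    mixedPowerTerm I₁ I₂ u v k h ≤ span {v ^ (k - ℓ + 1)} * I₂ ^ (ℓ - 1) := by
  obtain ⟨t, rfl⟩ := Nat.exists_eq_add_of_lt hh
  obtain ⟨d, rfl⟩ := Nat.exists_eq_add_of_le hℓ
  rw [mixedPowerTerm, show h + t + 1 + d - h = d + 1 + t by omega,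
    show h + t + 1 + d - (h + t + 1) + 1 = d + 1 by omega, Nat.add_sub_cancel]
  simp only [← span_singleton_mul_span_singleton, ← span_singleton_pow]
  calc span {v} ^ (d + 1 + t) * span {u} ^ h * I₁ ^ (d + 1 + t) * I₂ ^ h
      ≤ span {v} ^ (d + 1 + t) * I₂ ^ h := mul_le_mul_left (mul_le_left.trans mul_le_left) _
    _ ≤ span {v} ^ (d + 1) * I₂ ^ t * I₂ ^ h := by
        rw [pow_add]
        gcongr
        exact (span_singleton_le_iff_mem _).2 hv
    _ = span {v} ^ (d + 1) * I₂ ^ (h + t) := by ring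

theorem mixedPowerTerm_le (k ℓ : ℕ) :
    mixedPowerTerm I₁ I₂ u v k ℓ ≤ span {u ^ ℓ} * I₁ ^ (k - ℓ) :=
  calc mixedPowerTerm I₁ I₂ u v k ℓ
      = span {u ^ ℓ} * I₁ ^ (k - ℓ) * (span {v ^ (k - ℓ)} * I₂ ^ ℓ) := by
        rw [mixedPowerTerm, ← span_singleton_mul_span_singleton]
        ring
    _ ≤ span {u ^ ℓ} * I₁ ^ (k - ℓ) := mul_le_left

theorem mul_le_mixedPowerTerm_sub_one (hu : u ∈ I₁) {k ℓ : ℕ} (hℓ : 0 < ℓ) (hℓk : ℓ ≤ k) :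
    span {v ^ (k - ℓ + 1)} * I₂ ^ (ℓ - 1) * (span {u ^ ℓ} * I₁ ^ (k - ℓ)) ≤
      mixedPowerTerm I₁ I₂ u v k (ℓ - 1) := by
  obtain ⟨e, rfl⟩ : ∃ e, ℓ = e + 1 := ⟨ℓ - 1, by omega⟩
  obtain ⟨d, rfl⟩ := Nat.exists_eq_add_of_le hℓk
  rw [mixedPowerTerm, show e + 1 + d - (e + 1 - 1) = d + 1 by omega, Nat.add_sub_cancel_left,
    Nat.add_sub_cancel]
  simp only [← span_singleton_mul_span_singleton, ← span_singleton_pow]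
  calc span {v} ^ (d + 1) * I₂ ^ e * (span {u} ^ (e + 1) * I₁ ^ d)
      = span {v} ^ (d + 1) * span {u} ^ e * (span {u} * I₁ ^ d) * I₂ ^ e := by ring
    _ ≤ span {v} ^ (d + 1) * span {u} ^ e * (I₁ * I₁ ^ d) * I₂ ^ e := by
        gcongr
        exact (span_singleton_le_iff_mem _).2 hu
    _ = span {v} ^ (d + 1) * span {u} ^ e * I₁ ^ (d + 1) * I₂ ^ e := by ring

theorem mul_le_mixedPowerTerm (hv : v ∈ I₂) {k ℓ : ℕ} (hℓ : 0 < ℓ) :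
    span {v ^ (k - ℓ + 1)} * I₂ ^ (ℓ - 1) * (span {u ^ ℓ} * I₁ ^ (k - ℓ)) ≤
      mixedPowerTerm I₁ I₂ u v k ℓ :=
  calc span {v ^ (k - ℓ + 1)} * I₂ ^ (ℓ - 1) * (span {u ^ ℓ} * I₁ ^ (k - ℓ))
      = span {v ^ (k - ℓ) * u ^ ℓ} * I₁ ^ (k - ℓ) * (span {v} * I₂ ^ (ℓ - 1)) := by
        rw [pow_succ, ← span_singleton_mul_span_singleton, ← span_singleton_mul_span_singleton]
        ring
    _ ≤ span {v ^ (k - ℓ) * u ^ ℓ} * I₁ ^ (k - ℓ) * (I₂ * I₂ ^ (ℓ - 1)) := by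
        gcongr
        exact (span_singleton_le_iff_mem _).2 hv
    _ = mixedPowerTerm I₁ I₂ u v k ℓ := by rw [← pow_succ', Nat.sub_add_cancel hℓ, mixedPowerTerm]

end Ideal

open Ideal in
theorem betti_splitting_intersection_general
    (K : Type*) [Field K] (n m : ℕ)
    (I₁ I₂ : Ideal (MvPolynomial (Fin n ⊕ Fin m) K))
    (hI₁ : ∃ A : Set ((Fin n ⊕ Fin m) →₀ ℕ),
      (∀ a ∈ A, ∀ j : Fin m, a (Sum.inr j) = 0) ∧
      I₁ = Ideal.span ((fun a => (MvPolynomial.monomial a (1 : K))) '' A))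
    (hI₂ : ∃ B : Set ((Fin n ⊕ Fin m) →₀ ℕ),
      (∀ b ∈ B, ∀ i : Fin n, b (Sum.inl i) = 0) ∧
      I₂ = Ideal.span ((fun b => (MvPolynomial.monomial b (1 : K))) '' B))
    (hx : (∏ i : Fin n, (MvPolynomial.X (Sum.inl i) :
      MvPolynomial (Fin n ⊕ Fin m) K)) ∈ I₁)
    (hy : (∏ j : Fin m, (MvPolynomial.X (Sum.inr j) :
      MvPolynomial (Fin n ⊕ Fin m) K)) ∈ I₂)
    (k ℓ : ℕ) (hℓ₁ : 0 < ℓ) (hℓ₂ : ℓ ≤ k) :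
    (∑ h ∈ Finset.range ℓ,
        Ideal.span {(∏ j : Fin m, (MvPolynomial.X (Sum.inr j) :
            MvPolynomial (Fin n ⊕ Fin m) K)) ^ (k - h) *
          (∏ i : Fin n, MvPolynomial.X (Sum.inl i)) ^ h} *
        I₁ ^ (k - h) * I₂ ^ h) ⊓
      (Ideal.span {(∏ j : Fin m, (MvPolynomial.X (Sum.inr j) :
            MvPolynomial (Fin n ⊕ Fin m) K)) ^ (k - ℓ) *
          (∏ i : Fin n, MvPolynomial.X (Sum.inl i)) ^ ℓ} *
        I₁ ^ (k - ℓ) * I₂ ^ ℓ) =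
    Ideal.span {(∏ j : Fin m, (MvPolynomial.X (Sum.inr j) :
          MvPolynomial (Fin n ⊕ Fin m) K)) ^ (k - ℓ + 1) *
        (∏ i : Fin n, MvPolynomial.X (Sum.inl i)) ^ ℓ} *
      I₂ ^ (ℓ - 1) * I₁ ^ (k - ℓ) := by
  set u := ∏ i : Fin n, (X (Sum.inl i) : MvPolynomial (Fin n ⊕ Fin m) K)
  set v := ∏ j : Fin m, (X (Sum.inr j) : MvPolynomial (Fin n ⊕ Fin m) K)
  have hY : IsMonomialIdealIn (Set.range Sum.inr) (span {v} ^ (k - ℓ + 1) * I₂ ^ (ℓ - 1)) :=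
    ((IsMonomialIdealIn.span_prod_X _ _ fun j _ => Set.mem_range_self j).pow _).mul
      ((isMonomialIdealIn_range_inr hI₂).pow _)
  have hX : IsMonomialIdealIn (Set.range Sum.inl) (span {u} ^ ℓ * I₁ ^ (k - ℓ)) :=
    ((IsMonomialIdealIn.span_prod_X _ _ fun i _ => Set.mem_range_self i).pow _).mul
      ((isMonomialIdealIn_range_inl hI₁).pow _)
  rw [span_singleton_pow] at hY hX
  change (∑ h ∈ Finset.range ℓ, mixedPowerTerm I₁ I₂ u v k h) ⊓ mixedPowerTerm I₁ I₂ u v k ℓ = _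
  have hfactor : span {v ^ (k - ℓ + 1) * u ^ ℓ} * I₂ ^ (ℓ - 1) * I₁ ^ (k - ℓ) =
      span {v ^ (k - ℓ + 1)} * I₂ ^ (ℓ - 1) * (span {u ^ ℓ} * I₁ ^ (k - ℓ)) := by
    rw [← span_singleton_mul_span_singleton]
    ring
  rw [hfactor]
  refine le_antisymm ?_ (le_inf ?_ ?_)
  · rw [← hY.inf_eq_mul hX Set.isCompl_range_inl_range_inr.symm.disjoint]
    refine inf_le_inf ?_ (mixedPowerTerm_le k ℓ)
    exact Finset.sum_induction _ (· ≤ _) (fun _ _ => add_le) bot_le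
      fun h hh => mixedPowerTerm_le_of_lt hy (Finset.mem_range.1 hh) hℓ₂
  · exact (mul_le_mixedPowerTerm_sub_one hx hℓ₁ hℓ₂).trans
      (Finset.single_le_sum (fun _ _ => bot_le) (Finset.mem_range.2 (Nat.sub_lt hℓ₁ one_pos)))
  · exact mul_le_mixedPowerTerm hy hℓ₁

/-- Let `S = K[x₁,…,xₙ,y₁,…,yₘ]`, `I₁ ⊆ K[x]`, `I₂ ⊆ K[y]` monomial ideals
with `x₁⋯xₙ ∈ I₁` and `y₁⋯yₘ ∈ I₂`.  For `1 ≤ ℓ ≤ k` and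
`J_{ℓ-1} = ∑_{h=0}^{ℓ-1} (y₁⋯yₘ)^{k-h}(x₁⋯xₙ)^h I₁^{k-h} I₂^h` one has
`J_{ℓ-1} ∩ ((y₁⋯yₘ)^{k-ℓ}(x₁⋯xₙ)^ℓ I₁^{k-ℓ} I₂^ℓ)
  = (y₁⋯yₘ)^{k-ℓ+1} I₂^{ℓ-1} (x₁⋯xₙ)^ℓ I₁^{k-ℓ}`. -/
theorem betti_splitting_intersection
    (K : Type*) [Field K] (n m : ℕ)
    (I₁ I₂ : Ideal (MvPolynomial (Fin n ⊕ Fin m) K))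
    (hI₁ : ∃ A : Set ((Fin n ⊕ Fin m) →₀ ℕ),
      (∀ a ∈ A, ∀ j : Fin m, a (Sum.inr j) = 0) ∧
      I₁ = Ideal.span ((fun a => (MvPolynomial.monomial a (1 : K))) '' A))
    (hI₂ : ∃ B : Set ((Fin n ⊕ Fin m) →₀ ℕ),
      (∀ b ∈ B, ∀ i : Fin n, b (Sum.inl i) = 0) ∧
      I₂ = Ideal.span ((fun b => (MvPolynomial.monomial b (1 : K))) '' B))
    (hx : (∏ i : Fin n, (MvPolynomial.X (Sum.inl i) :
      MvPolynomial (Fin n ⊕ Fin m) K)) ∈ I₁)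
    (hy : (∏ j : Fin m, (MvPolynomial.X (Sum.inr j) :
      MvPolynomial (Fin n ⊕ Fin m) K)) ∈ I₂)
    (k ℓ : ℕ) (hk : 1 ≤ k) (hℓ₁ : 0 < ℓ) (hℓ₂ : ℓ ≤ k) :
    (∑ h ∈ Finset.range ℓ,
        Ideal.span {(∏ j : Fin m, (MvPolynomial.X (Sum.inr j) :
            MvPolynomial (Fin n ⊕ Fin m) K)) ^ (k - h) *
          (∏ i : Fin n, MvPolynomial.X (Sum.inl i)) ^ h} *
        I₁ ^ (k - h) * I₂ ^ h) ⊓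
      (Ideal.span {(∏ j : Fin m, (MvPolynomial.X (Sum.inr j) :
            MvPolynomial (Fin n ⊕ Fin m) K)) ^ (k - ℓ) *
          (∏ i : Fin n, MvPolynomial.X (Sum.inl i)) ^ ℓ} *
        I₁ ^ (k - ℓ) * I₂ ^ ℓ) =
    Ideal.span {(∏ j : Fin m, (MvPolynomial.X (Sum.inr j) :
          MvPolynomial (Fin n ⊕ Fin m) K)) ^ (k - ℓ + 1) *
        (∏ i : Fin n, MvPolynomial.X (Sum.inl i)) ^ ℓ} *
      I₂ ^ (ℓ - 1) * I₁ ^ (k - ℓ) :=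
  betti_splitting_intersection_general K n m I₁ I₂ hI₁ hI₂ hx hy k ℓ hℓ₁ hℓ₂
end

section
/- Let G be a finite simple graph on the vertex set [n] without isolated vertices, and let I_1 = I_c(G) be its complementary edge ideal in S = K[x_1,…,x_n]. Then for all integers k ≥ ℓ ≥ 1 one has ∂( (x_1⋯x_n)^{ℓ} I_1^{k−ℓ} ) ⊆ (x_1⋯x_n)^{ℓ−1} I_1^{k+1−ℓ}, where ∂J denotes the ideal generated by all u/x_i with u a minimal monomial generator of J and x_i dividing u. -/
open MvPolynomial Finset

set_option maxHeartbeats 1000000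
set_option synthInstance.maxHeartbeats 1000000

/-!
If `u = (x₁⋯xₙ)^ℓ z` with `z ∈ I_c(G)^{k-ℓ}` and `xᵢ ∣ u`, pick a neighbour `j` of `i`.
Then `x₁⋯xₙ = xᵢ · xⱼ · (x₁⋯xₙ)/(xᵢxⱼ)`, so `u/xᵢ = (x₁⋯xₙ)^{ℓ-1} · xⱼ (x₁⋯xₙ)/(xᵢxⱼ) · z`,
and the middle factor contributes one more power of `I_c(G)`.
-/

theorem Ideal.mem_span_pow_mul_pow_succ_of_mul_mem {R : Type*} [CommRing R] [IsDomain R]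
    {I : Ideal R} {P x w v : R} {ℓ m : ℕ} (hx : x ≠ 0) (hw : w ∈ I) (hP : x * w = P)
    (hv : x * v ∈ Ideal.span {P ^ (ℓ + 1)} * I ^ m) :
    v ∈ Ideal.span {P ^ ℓ} * I ^ (m + 1) := by
  obtain ⟨z, hz, hxv⟩ := Ideal.mem_span_singleton_mul.1 hv
  have hv_eq : v = P ^ ℓ * (w * z) := by
    apply mul_left_cancel₀ hx
    rw [← hxv, ← hP]
    ring
  rw [hv_eq, pow_succ']
  exact Ideal.mul_mem_mul (Ideal.mem_span_singleton_self _) (Ideal.mul_mem_mul hw hz)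

namespace CompEdge

variable {K : Type*} [Field K] {n : ℕ}

theorem derivIdeal_le_of_forall_X_mul_mem {J L : Ideal (MvPolynomial (Fin n) K)}
    (h : ∀ v i, X i * v ∈ J → v ∈ L) : derivIdeal K n J ≤ L :=
  Ideal.span_le.2 fun v ⟨_, ⟨_, huJ, _⟩, i, _, hXv⟩ => h v i (hXv ▸ huJ)

theorem prod_X_eq_X_mul_X_mul_sqMon_sdiff {i j : Fin n} (hij : i ≠ j) :
    ∏ t : Fin n, (X t : MvPolynomial (Fin n) K) = X i * X j * sqMon K n (univ \ {i, j}) := by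
  rw [sqMon, ← prod_sdiff (subset_univ {i, j}), prod_pair hij]
  ring

theorem sqMon_sdiff_pair_mem_compEdgeIdeal {G : SimpleGraph (Fin n)} {i j : Fin n}
    (hij : G.Adj i j) : sqMon K n (univ \ {i, j}) ∈ compEdgeIdeal K n G :=
  Ideal.subset_span ⟨i, j, hij, rfl⟩

end CompEdge

open CompEdge in
theorem derivIdeal_power_compEdgeIdeal_general
    (K : Type*) [Field K] (n : ℕ) (G : SimpleGraph (Fin n))
    (hG : G.NoIsolatedVertices) (k ℓ : ℕ) (hℓ : 1 ≤ ℓ) :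
    derivIdeal K n
        (Ideal.span {(∏ i : Fin n, (MvPolynomial.X i : MvPolynomial (Fin n) K)) ^ ℓ} *
          (compEdgeIdeal K n G) ^ (k - ℓ)) ≤
      Ideal.span {(∏ i : Fin n, (MvPolynomial.X i : MvPolynomial (Fin n) K)) ^ (ℓ - 1)} *
        (compEdgeIdeal K n G) ^ (k + 1 - ℓ) := by
  obtain ⟨ℓ, rfl⟩ := Nat.exists_eq_add_of_le' hℓ
  refine derivIdeal_le_of_forall_X_mul_mem fun v i hv => ?_
  obtain ⟨j, hij⟩ := hG i
  have hw : X j * sqMon K n (univ \ {i, j}) ∈ compEdgeIdeal K n G :=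
    Ideal.mul_mem_left _ _ (sqMon_sdiff_pair_mem_compEdgeIdeal hij)
  have hP : X i * (X j * sqMon K n (univ \ {i, j})) = ∏ t : Fin n, X t := by
    rw [prod_X_eq_X_mul_X_mul_sqMon_sdiff hij.ne, mul_assoc]
  rw [Nat.add_sub_cancel]
  exact Ideal.mul_mono_right (Ideal.pow_le_pow_right (by omega))
    (Ideal.mem_span_pow_mul_pow_succ_of_mul_mem (X_ne_zero i) hw hP hv)

open CompEdge in
/-- For a graph `G` on `[n]` without isolated vertices, with
`I₁ = I_c(G)`, for all `k ≥ ℓ ≥ 1` one has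
`∂((x₁⋯xₙ)^ℓ I₁^{k-ℓ}) ⊆ (x₁⋯xₙ)^{ℓ-1} I₁^{k+1-ℓ}`. -/
theorem derivIdeal_power_compEdgeIdeal
    (K : Type*) [Field K] (n : ℕ) (G : SimpleGraph (Fin n))
    (hG : G.NoIsolatedVertices) (k ℓ : ℕ) (hℓ : 1 ≤ ℓ) (hk : ℓ ≤ k) :
    derivIdeal K n
        (Ideal.span {(∏ i : Fin n, (MvPolynomial.X i : MvPolynomial (Fin n) K)) ^ ℓ} *
          (compEdgeIdeal K n G) ^ (k - ℓ)) ≤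
      Ideal.span {(∏ i : Fin n, (MvPolynomial.X i : MvPolynomial (Fin n) K)) ^ (ℓ - 1)} *
        (compEdgeIdeal K n G) ^ (k + 1 - ℓ) :=
  derivIdeal_power_compEdgeIdeal_general K n G hG k ℓ hℓ
end
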